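/- arXiv:2002.02579 — 6 statements merged into one kernel-verified Lean document; each statement's English description precedes it below -/
import Mathlib

section
/- Let X be a random variable on a space 𝒳, and let L, U : 𝒳 → ℝ with L(x) ≤ U(x) for all x. For any measurable f : 𝒳 → ℝ, the expectation of the pointwise supremum equals the supremum over functions: E[ sup_{c ∈ [L(X),U(X)]} |c| · 1{sgn(f(X)) ≠ sgn(c)} ] = sup over measurable C' with L ≤ C' ≤ U pointwise of E[ |C'(X)| · 1{sgn(f(X)) ≠ sgn(C'(X))} ], where sgn(x) = 1 if x > 0 and −1 otherwise. -/
open MeasureTheory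
open scoped Classical

/-- sgn(t) = 1 if t > 0 and -1 otherwise. -/
noncomputable def sgnR (t : ℝ) : ℝ := if 0 < t then 1 else -1

/-- real-valued indicator of a proposition -/
noncomputable def indF (P : Prop) : ℝ := if P then 1 else 0

/-- worst-case weighted misclassification loss:
  sup_{c ∈ [L,U]} |c| · 1{sgn f ≠ sgn c} -/
noncomputable def Wloss (L U f : ℝ) : ℝ :=
  ⨆ c : Set.Icc L U, |c.1| * indF (sgnR f ≠ sgnR c.1)

lemma indF_nonneg (P : Prop) : 0 ≤ indF P := by
  unfold indF; split <;> norm_num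

lemma indF_le_one (P : Prop) : indF P ≤ 1 := by
  unfold indF; split <;> norm_num

lemma sgnR_meas : Measurable sgnR :=
  Measurable.ite (measurableSet_lt measurable_const measurable_id) measurable_const
    measurable_const

/-- the optimizer: L if f > 0, else U -/
lemma key (L U f c : ℝ) (h1 : L ≤ c) (h2 : c ≤ U) :
    |c| * indF (sgnR f ≠ sgnR c) ≤
      |if 0 < f then L else U| * indF (sgnR f ≠ sgnR (if 0 < f then L else U)) := by
  by_cases hfp : 0 < f
  · simp only [if_pos hfp]
    by_cases hc : 0 < c
    · have : sgnR f = sgnR c := by simp [sgnR, hfp, hc]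
      have hz : indF (sgnR f ≠ sgnR c) = 0 := by
        rw [this]; unfold indF; rw [if_neg (by simp)]
      rw [hz, mul_zero]
      exact mul_nonneg (abs_nonneg _) (indF_nonneg _)
    · push_neg at hc
      have hL : L ≤ 0 := le_trans h1 hc
      have hsf : sgnR f = 1 := by simp [sgnR, hfp]
      have hsL : sgnR L = -1 := by simp [sgnR, not_lt.mpr hL]
      have hsc : sgnR c = -1 := by simp [sgnR, not_lt.mpr hc]
      have h1' : indF (sgnR f ≠ sgnR c) = 1 := by
        rw [hsf, hsc]; unfold indF; rw [if_pos (by norm_num)]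
      have h2' : indF (sgnR f ≠ sgnR L) = 1 := by
        rw [hsf, hsL]; unfold indF; rw [if_pos (by norm_num)]
      rw [h1', h2', abs_of_nonpos hc, abs_of_nonpos hL]
      linarith
  · simp only [if_neg hfp]
    by_cases hc : 0 < c
    · have hU : 0 < U := lt_of_lt_of_le hc h2
      have hsf : sgnR f = -1 := by simp [sgnR, hfp]
      have hsU : sgnR U = 1 := by simp [sgnR, hU]
      have hsc : sgnR c = 1 := by simp [sgnR, hc]
      have h1' : indF (sgnR f ≠ sgnR c) = 1 := by
        rw [hsf, hsc]; unfold indF; rw [if_pos (by norm_num)]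
      have h2' : indF (sgnR f ≠ sgnR U) = 1 := by
        rw [hsf, hsU]; unfold indF; rw [if_pos (by norm_num)]
      rw [h1', h2', abs_of_pos hc, abs_of_pos hU]
      linarith
    · push_neg at hc
      have : sgnR f = sgnR c := by simp [sgnR, hfp, not_lt.mpr hc]
      have hz : indF (sgnR f ≠ sgnR c) = 0 := by
        rw [this]; unfold indF; rw [if_neg (by simp)]
      rw [hz, mul_zero]
      exact mul_nonneg (abs_nonneg _) (indF_nonneg _)

lemma wloss_eq (L U f : ℝ) (h : L ≤ U) :
    Wloss L U f =
      |if 0 < f then L else U| * indF (sgnR f ≠ sgnR (if 0 < f then L else U)) := by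
  haveI : Nonempty (Set.Icc L U) := (Set.nonempty_Icc.mpr h).to_subtype
  apply le_antisymm
  · exact ciSup_le fun c => key L U f c.1 c.2.1 c.2.2
  · have hmem : (if 0 < f then L else U) ∈ Set.Icc L U := by
      split <;> simp [h]
    have hbdd : BddAbove (Set.range fun c : Set.Icc L U =>
        |c.1| * indF (sgnR f ≠ sgnR c.1)) := by
      refine ⟨max |L| |U|, ?_⟩
      rintro _ ⟨c, rfl⟩
      have hc1 := c.2.1
      have hc2 := c.2.2
      have habs : |c.1| ≤ max |L| |U| := by
        rw [abs_le]
        constructor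
        · have := neg_abs_le L
          have := le_max_left |L| |U|
          linarith
        · have := le_abs_self U
          have := le_max_right |L| |U|
          linarith
      calc |c.1| * indF (sgnR f ≠ sgnR c.1) ≤ |c.1| * 1 :=
            mul_le_mul_of_nonneg_left (indF_le_one _) (abs_nonneg _)
        _ = |c.1| := mul_one _
        _ ≤ max |L| |U| := habs
    exact le_ciSup hbdd (⟨_, hmem⟩ : Set.Icc L U)

/-- the expectation of the pointwise supremum equals the
supremum, over measurable C' with L ≤ C' ≤ U pointwise, of the expected
weighted misclassification error. -/
theorem stmt0 {𝒳 : Type*} [MeasurableSpace 𝒳] (μ : Measure 𝒳) [IsProbabilityMeasure μ]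
    (L U : 𝒳 → ℝ) (hLm : Measurable L) (hUm : Measurable U)
    (hLU : ∀ x, L x ≤ U x) (M : ℝ) (hbdd : ∀ x, |L x| ≤ M ∧ |U x| ≤ M)
    (f : 𝒳 → ℝ) (hf : Measurable f) :
    ∫ x, Wloss (L x) (U x) (f x) ∂μ =
      sSup {r : ℝ | ∃ C' : 𝒳 → ℝ, Measurable C' ∧
        (∀ x, L x ≤ C' x ∧ C' x ≤ U x) ∧
        r = ∫ x, |C' x| * indF (sgnR (f x) ≠ sgnR (C' x)) ∂μ} := by
  classical
  set C : 𝒳 → ℝ := fun x => if 0 < f x then L x else U x with hC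
  have hCm : Measurable C :=
    Measurable.ite (measurableSet_lt measurable_const hf) hLm hUm
  have hCmem : ∀ x, L x ≤ C x ∧ C x ≤ U x := by
    intro x
    simp only [hC]
    split <;> constructor <;> simp [hLU x]
  -- measurability and integrability of the generic integrand
  have hmeas : ∀ (g : 𝒳 → ℝ), Measurable g →
      Measurable (fun x => |g x| * indF (sgnR (f x) ≠ sgnR (g x))) := by
    intro g hg
    have hs : MeasurableSet {x | sgnR (f x) ≠ sgnR (g x)} := by
      have : MeasurableSet {x | sgnR (f x) = sgnR (g x)} :=
        measurableSet_eq_fun (sgnR_meas.comp hf) (sgnR_meas.comp hg)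
      exact this.compl
    have hind : (fun x => indF (sgnR (f x) ≠ sgnR (g x))) =
        Set.indicator {x | sgnR (f x) ≠ sgnR (g x)} (fun _ => (1:ℝ)) := by
      funext x
      by_cases hx : sgnR (f x) ≠ sgnR (g x)
      · simp [indF, Set.indicator_apply, Set.mem_setOf_eq, hx]
      · simp [indF, Set.indicator_apply, Set.mem_setOf_eq, hx]
    exact (hg.abs).mul (hind ▸ measurable_const.indicator hs)
  have hint : ∀ (g : 𝒳 → ℝ), Measurable g → (∀ x, L x ≤ g x ∧ g x ≤ U x) →
      Integrable (fun x => |g x| * indF (sgnR (f x) ≠ sgnR (g x))) μ := by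
    intro g hg hgb
    refine Integrable.mono' (integrable_const M) ((hmeas g hg).aestronglyMeasurable)
      (ae_of_all _ fun x => ?_)
    have h1 : 0 ≤ |g x| * indF (sgnR (f x) ≠ sgnR (g x)) :=
      mul_nonneg (abs_nonneg _) (indF_nonneg _)
    have habs : |g x| ≤ M := by
      rcases hbdd x with ⟨hl, hu⟩
      rcases hgb x with ⟨h1', h2'⟩
      rw [abs_le] at *
      constructor <;> linarith [hl.1, hl.2, hu.1, hu.2]
    rw [Real.norm_eq_abs, abs_of_nonneg h1]
    calc |g x| * indF (sgnR (f x) ≠ sgnR (g x)) ≤ |g x| * 1 :=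
          mul_le_mul_of_nonneg_left (indF_le_one _) (abs_nonneg _)
      _ = |g x| := mul_one _
      _ ≤ M := habs
  have heq : ∀ x, Wloss (L x) (U x) (f x) =
      |C x| * indF (sgnR (f x) ≠ sgnR (C x)) := fun x => wloss_eq _ _ _ (hLU x)
  have hintegral : ∫ x, Wloss (L x) (U x) (f x) ∂μ =
      ∫ x, |C x| * indF (sgnR (f x) ≠ sgnR (C x)) ∂μ :=
    integral_congr_ae (ae_of_all _ heq)
  rw [hintegral]
  symm
  apply IsGreatest.csSup_eq
  constructor
  · exact ⟨C, hCm, hCmem, rfl⟩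
  · rintro r ⟨g, hg, hgb, rfl⟩
    refine integral_mono (hint g hg hgb) (hint C hCm hCmem) fun x => ?_
    have := key (L x) (U x) (f x) (g x) (hgb x).1 (hgb x).2
    simpa [hC] using this
end

section
/- Let X be a random variable, L, U : 𝒳 → ℝ measurable with L ≤ U, and define η(x) = |U(x)|·1{L(x) > 0} − |L(x)|·1{U(x) < 0} + (|U(x)| − |L(x)|)·1{L(x) ≤ 0 ≤ U(x)}. Define the risk R_upper(f) = E[ sup_{c ∈ [L(X),U(X)]} |c| · 1{sgn(f(X)) ≠ sgn(c)} ]. Then any measurable f* with sgn(f*(x)) = sgn(η(x)) (with the convention sgn takes value +1 when η(x) ≥ 0 and −1 when η(x) < 0) minimizes R_upper over all measurable functions. -/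
open MeasureTheory
open scoped Classical

/-- η(L,U) = |U|·1{L>0} − |L|·1{U<0} + (|U|−|L|)·1{L ≤ 0 ≤ U} -/
noncomputable def etaF (L U : ℝ) : ℝ :=
  |U| * indF (0 < L) - |L| * indF (U < 0) + (|U| - |L|) * indF (L ≤ 0 ∧ 0 ≤ U)

/-- closed form of the worst-case loss -/
noncomputable def Wc (L U f : ℝ) : ℝ := if 0 < f then max (-L) 0 else max U 0

lemma wloss_eq_s4 (L U f : ℝ) (h : L ≤ U) : Wloss L U f = Wc L U f := by
  have hne : Nonempty (Set.Icc L U) := Set.Nonempty.to_subtype (Set.nonempty_Icc.2 h)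
  set g : Set.Icc L U → ℝ := fun c => |c.1| * indF (sgnR f ≠ sgnR c.1) with hg
  have hbdd : BddAbove (Set.range g) := by
    refine ⟨max (-L) U, ?_⟩
    rintro y ⟨c, rfl⟩
    have hc1 := c.2.1
    have hc2 := c.2.2
    have habs : |c.1| ≤ max (-L) U := by
      rcases abs_cases c.1 with ⟨he, _⟩ | ⟨he, _⟩
      · rw [he]; exact le_max_of_le_right hc2
      · rw [he]; exact le_max_of_le_left (by linarith)
    have hind : indF (sgnR f ≠ sgnR c.1) ≤ 1 := by
      unfold indF; split <;> norm_num
    calc g c ≤ |c.1| * 1 := by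
          exact mul_le_mul_of_nonneg_left hind (abs_nonneg _)
      _ ≤ max (-L) U := by simpa using habs
  unfold Wloss Wc
  by_cases hf : 0 < f
  · simp only [if_pos hf]
    apply le_antisymm
    · apply ciSup_le
      intro c
      have hc1 := c.2.1
      by_cases hc : 0 < c.1
      · have : sgnR f = sgnR c.1 := by unfold sgnR; rw [if_pos hf, if_pos hc]
        simp [indF, this, le_max_right]
      · have hs : sgnR f ≠ sgnR c.1 := by
          unfold sgnR; rw [if_pos hf, if_neg hc]; norm_num
        simp only [indF, if_pos hs, mul_one]
        push_neg at hc
        rcases abs_cases c.1 with ⟨he, _⟩ | ⟨he, _⟩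
        · rw [he]; exact le_max_of_le_right (by linarith)
        · rw [he]; exact le_max_of_le_left (by linarith)
    · rcases le_or_gt L 0 with hL | hL
      · have hle : max (-L) 0 = g ⟨L, Set.mem_Icc.2 ⟨le_refl L, h⟩⟩ := by
          have hs : sgnR f ≠ sgnR L := by
            unfold sgnR; rw [if_pos hf, if_neg (not_lt.2 hL)]; norm_num
          simp [hg, indF, hs, abs_of_nonpos hL, max_eq_left (by linarith : (0:ℝ) ≤ -L)]
        rw [hle]; exact le_ciSup hbdd _
      · have h0 : max (-L) 0 = 0 := max_eq_right (by linarith)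
        rw [h0]
        have := le_ciSup hbdd (⟨L, Set.mem_Icc.2 ⟨le_refl L, h⟩⟩ : Set.Icc L U)
        refine le_trans ?_ this
        have : 0 ≤ g ⟨L, Set.mem_Icc.2 ⟨le_refl L, h⟩⟩ := by
          apply mul_nonneg (abs_nonneg _); unfold indF; split <;> norm_num
        exact this
  · simp only [if_neg hf]
    apply le_antisymm
    · apply ciSup_le
      intro c
      have hc2 := c.2.2
      by_cases hc : 0 < c.1
      · have hs : sgnR f ≠ sgnR c.1 := by
          unfold sgnR; rw [if_neg hf, if_pos hc]; norm_num
        simp only [indF, if_pos hs, mul_one]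
        rw [abs_of_pos hc]; exact le_max_of_le_left hc2
      · have : sgnR f = sgnR c.1 := by unfold sgnR; rw [if_neg hf, if_neg hc]
        simp [indF, this, le_max_right]
    · rcases le_or_gt U 0 with hU | hU
      · have h0 : max U 0 = 0 := max_eq_right hU
        rw [h0]
        have hle := le_ciSup hbdd (⟨U, Set.mem_Icc.2 ⟨h, le_refl U⟩⟩ : Set.Icc L U)
        refine le_trans ?_ hle
        apply mul_nonneg (abs_nonneg _); unfold indF; split <;> norm_num
      · have hle : max U 0 = g ⟨U, Set.mem_Icc.2 ⟨h, le_refl U⟩⟩ := by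
          have hs : sgnR f ≠ sgnR U := by
            unfold sgnR; rw [if_neg hf, if_pos hU]; norm_num
          simp [hg, indF, hs, abs_of_pos hU, max_eq_left hU.le]
        rw [hle]; exact le_ciSup hbdd _

lemma eta_compare (L U : ℝ) (h : L ≤ U) :
    (0 ≤ etaF L U → max (-L) 0 ≤ max U 0) ∧ (etaF L U < 0 → max U 0 ≤ max (-L) 0) := by
  unfold etaF indF
  constructor <;> intro he <;> split_ifs at he with h1 h2 h3 <;>
    try obtain ⟨h3a, h3b⟩ := h3
  all_goals
    simp only [max_le_iff, le_max_iff]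
  all_goals
    rcases abs_cases L with ⟨eL, sL⟩ | ⟨eL, sL⟩ <;> rcases abs_cases U with ⟨eU, sU⟩ | ⟨eU, sU⟩ <;>
      rw [eL, eU] at he <;>
      first
        | exact Or.inl ⟨by linarith, by linarith⟩
        | exact Or.inr ⟨by linarith, le_rfl⟩
        | (exfalso; push_neg at *; linarith)
        | (exfalso; push_neg at *; rename_i hImp _; linarith [hImp (by linarith)])

/-- any measurable f* with sgn(f*(x)) = +1 iff η(x) ≥ 0 (and −1
otherwise) minimizes the risk R_upper over all measurable functions. -/
theorem stmt4 {𝒳 : Type*} [MeasurableSpace 𝒳] (μ : Measure 𝒳) [IsProbabilityMeasure μ]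
    (L U : 𝒳 → ℝ) (hLm : Measurable L) (hUm : Measurable U) (hLU : ∀ x, L x ≤ U x)
    (M : ℝ) (hbdd : ∀ x, |L x| ≤ M ∧ |U x| ≤ M)
    (fstar : 𝒳 → ℝ) (hfm : Measurable fstar)
    (hstar : ∀ x, sgnR (fstar x) = if 0 ≤ etaF (L x) (U x) then (1 : ℝ) else -1) :
    ∀ f : 𝒳 → ℝ, Measurable f →
      ∫ x, Wloss (L x) (U x) (fstar x) ∂μ ≤ ∫ x, Wloss (L x) (U x) (f x) ∂μ := by
  intro f hf
  have hrw : ∀ (g : 𝒳 → ℝ), (fun x => Wloss (L x) (U x) (g x)) =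
      fun x => Wc (L x) (U x) (g x) := by
    intro g; funext x; exact wloss_eq_s4 _ _ _ (hLU x)
  rw [hrw fstar, hrw f]
  set C := max M 0 with hC
  have hmeas : ∀ (g : 𝒳 → ℝ), Measurable g →
      Measurable (fun x => Wc (L x) (U x) (g x)) := by
    intro g hg
    unfold Wc
    exact Measurable.ite (measurableSet_lt measurable_const hg)
      ((hLm.neg).max measurable_const) (hUm.max measurable_const)
  have hint : ∀ (g : 𝒳 → ℝ), Measurable g →
      Integrable (fun x => Wc (L x) (U x) (g x)) μ := by
    intro g hg
    refine ⟨(hmeas g hg).aestronglyMeasurable, ?_⟩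
    apply HasFiniteIntegral.of_bounded (C := C)
    filter_upwards with x
    have h1 := (hbdd x).1
    have h2 := (hbdd x).2
    have hnn : 0 ≤ Wc (L x) (U x) (g x) := by unfold Wc; split <;> exact le_max_right _ _
    rw [Real.norm_eq_abs, abs_of_nonneg hnn]
    unfold Wc
    rcases abs_le.1 h1 with ⟨h1a, h1b⟩
    rcases abs_le.1 h2 with ⟨h2a, h2b⟩
    split
    · exact max_le (le_max_of_le_left (by linarith)) (le_max_right _ _)
    · exact max_le (le_max_of_le_left (by linarith)) (le_max_right _ _)
  refine integral_mono (hint fstar hfm) (hint f hf) ?_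
  intro x
  dsimp only
  have hsf := hstar x
  have hcomp := eta_compare (L x) (U x) (hLU x)
  by_cases he : 0 ≤ etaF (L x) (U x)
  · have hpos : 0 < fstar x := by
      by_contra hp
      rw [if_pos he] at hsf
      unfold sgnR at hsf
      rw [if_neg hp] at hsf
      norm_num at hsf
    have hl : Wc (L x) (U x) (fstar x) = max (-(L x)) 0 := by unfold Wc; rw [if_pos hpos]
    rw [hl]
    unfold Wc
    split
    · exact le_refl _
    · exact hcomp.1 he
  · have hneg : ¬ 0 < fstar x := by
      intro hp
      rw [if_neg he] at hsf
      unfold sgnR at hsf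
      rw [if_pos hp] at hsf
      norm_num at hsf
    have hl : Wc (L x) (U x) (fstar x) = max (U x) 0 := by unfold Wc; rw [if_neg hneg]
    rw [hl]
    unfold Wc
    split
    · exact hcomp.2 (not_le.1 he)
    · exact le_refl _
end

section
/- Suppose L(x) ≤ C(x) ≤ U(x) for all x. Then for any measurable decision rule f, 0 ≤ R_upper(f) − R(f) ≤ E[U(X) − L(X)], where R(f) = E[|C(X)|·1{sgn(f(X)) ≠ sgn(C(X))}] and R_upper(f) = E[ sup_{c ∈ [L(X),U(X)]} |c|·1{sgn(f(X)) ≠ sgn(c)} ]. -/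
open MeasureTheory
open scoped Classical

lemma Wloss_eq {L U f : ℝ} (hLU : L ≤ U) :
    Wloss L U f = if 0 < f then max (-L) 0 else max U 0 := by
  have hne : Nonempty (Set.Icc L U) := ⟨⟨L, Set.left_mem_Icc.mpr hLU⟩⟩
  have hbdd : BddAbove (Set.range fun c : Set.Icc L U =>
      |c.1| * indF (sgnR f ≠ sgnR c.1)) := by
    refine ⟨max (-L) U, ?_⟩
    rintro _ ⟨c, rfl⟩
    have h1 : |c.1| ≤ max (-L) U := by
      rcases c.2 with ⟨hl, hu⟩
      rcases abs_cases c.1 with ⟨h, _⟩ | ⟨h, _⟩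
      · rw [h]; exact le_max_of_le_right hu
      · rw [h]; exact le_max_of_le_left (by linarith)
    calc |c.1| * indF (sgnR f ≠ sgnR c.1) ≤ |c.1| * 1 :=
          mul_le_mul_of_nonneg_left (indF_le_one _) (abs_nonneg _)
      _ ≤ max (-L) U := by rw [mul_one]; exact h1
  apply le_antisymm
  · apply ciSup_le
    intro c
    rcases c.2 with ⟨hl, hu⟩
    by_cases hP : sgnR f ≠ sgnR c.1
    · have : indF (sgnR f ≠ sgnR c.1) = 1 := if_pos hP
      rw [this, mul_one]
      by_cases hfpos : 0 < f
      · have hc : ¬ 0 < c.1 := by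
          intro hc
          apply hP
          simp [sgnR, hfpos, hc]
        rw [if_pos hfpos, abs_of_nonpos (not_lt.1 hc)]
        exact le_max_of_le_left (by linarith)
      · have hc : 0 < c.1 := by
          by_contra hc
          apply hP
          simp [sgnR, hfpos, hc]
        rw [if_neg hfpos, abs_of_pos hc]
        exact le_max_of_le_left hu
    · have : indF (sgnR f ≠ sgnR c.1) = 0 := if_neg hP
      rw [this, mul_zero]
      split <;> exact le_max_right _ _
  · by_cases hfpos : 0 < f
    · rw [if_pos hfpos]
      rcases le_or_gt L 0 with hL | hL
      · have hmem : L ∈ Set.Icc L U := Set.left_mem_Icc.mpr hLU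
        have := le_ciSup hbdd (⟨L, hmem⟩ : Set.Icc L U)
        have hsgn : sgnR f ≠ sgnR L := by
          simp only [sgnR, if_pos hfpos, if_neg (not_lt.2 hL)]
          norm_num
        have hval : |L| * indF (sgnR f ≠ sgnR L) = -L := by
          rw [indF, if_pos hsgn, mul_one, abs_of_nonpos hL]
        rw [max_eq_left (by linarith)]
        calc -L = |L| * indF (sgnR f ≠ sgnR L) := hval.symm
          _ ≤ _ := this
      · rw [max_eq_right (by linarith)]
        have hmem : L ∈ Set.Icc L U := Set.left_mem_Icc.mpr hLU
        have := le_ciSup hbdd (⟨L, hmem⟩ : Set.Icc L U)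
        exact le_trans (mul_nonneg (abs_nonneg _) (indF_nonneg _)) this
    · rw [if_neg hfpos]
      rcases lt_or_ge 0 U with hU | hU
      · have hmem : U ∈ Set.Icc L U := Set.right_mem_Icc.mpr hLU
        have := le_ciSup hbdd (⟨U, hmem⟩ : Set.Icc L U)
        have hsgn : sgnR f ≠ sgnR U := by
          simp only [sgnR, if_neg hfpos, if_pos hU]
          norm_num
        have hval : |U| * indF (sgnR f ≠ sgnR U) = U := by
          rw [indF, if_pos hsgn, mul_one, abs_of_pos hU]
        rw [max_eq_left (by linarith)]
        calc U = |U| * indF (sgnR f ≠ sgnR U) := hval.symm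
          _ ≤ _ := this
      · rw [max_eq_right hU]
        have hmem : U ∈ Set.Icc L U := Set.right_mem_Icc.mpr hLU
        have := le_ciSup hbdd (⟨U, hmem⟩ : Set.Icc L U)
        exact le_trans (mul_nonneg (abs_nonneg _) (indF_nonneg _)) this

lemma pt_lower {C L U f : ℝ} (h1 : L ≤ C) (h2 : C ≤ U) :
    |C| * indF (sgnR f ≠ sgnR C) ≤ (if 0 < f then max (-L) 0 else max U 0) := by
  by_cases hfpos : 0 < f <;> by_cases hc : 0 < C
  · have : sgnR f = sgnR C := by simp [sgnR, hfpos, hc]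
    rw [if_pos hfpos, indF, if_neg (by simp [this]), mul_zero]
    exact le_max_right _ _
  · have hsgn : sgnR f ≠ sgnR C := by
      simp only [sgnR, if_pos hfpos, if_neg hc]; norm_num
    rw [if_pos hfpos, indF, if_pos hsgn, mul_one, abs_of_nonpos (not_lt.1 hc)]
    exact le_max_of_le_left (by linarith)
  · have hsgn : sgnR f ≠ sgnR C := by
      simp only [sgnR, if_neg hfpos, if_pos hc]; norm_num
    rw [if_neg hfpos, indF, if_pos hsgn, mul_one, abs_of_pos hc]
    exact le_max_of_le_left h2
  · have : sgnR f = sgnR C := by simp [sgnR, hfpos, hc]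
    rw [if_neg hfpos, indF, if_neg (by simp [this]), mul_zero]
    exact le_max_right _ _

lemma pt_upper {C L U f : ℝ} (h1 : L ≤ C) (h2 : C ≤ U) :
    (if 0 < f then max (-L) 0 else max U 0) ≤
      |C| * indF (sgnR f ≠ sgnR C) + (U - L) := by
  by_cases hfpos : 0 < f <;> by_cases hc : 0 < C
  · have : sgnR f = sgnR C := by simp [sgnR, hfpos, hc]
    rw [if_pos hfpos, indF, if_neg (by simp [this]), mul_zero, zero_add]
    apply max_le <;> linarith
  · have hsgn : sgnR f ≠ sgnR C := by
      simp only [sgnR, if_pos hfpos, if_neg hc]; norm_num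
    rw [if_pos hfpos, indF, if_pos hsgn, mul_one, abs_of_nonpos (not_lt.1 hc)]
    have hC : C ≤ 0 := not_lt.1 hc
    apply max_le <;> linarith
  · have hsgn : sgnR f ≠ sgnR C := by
      simp only [sgnR, if_neg hfpos, if_pos hc]; norm_num
    rw [if_neg hfpos, indF, if_pos hsgn, mul_one, abs_of_pos hc]
    apply max_le <;> linarith
  · have : sgnR f = sgnR C := by simp [sgnR, hfpos, hc]
    rw [if_neg hfpos, indF, if_neg (by simp [this]), mul_zero, zero_add]
    have hC : C ≤ 0 := not_lt.1 hc
    apply max_le <;> linarith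

/-- if L ≤ C ≤ U pointwise then for any measurable decision rule f,
0 ≤ R_upper(f) − R(f) ≤ E[U(X) − L(X)]. -/
theorem stmt6 {𝒳 : Type*} [MeasurableSpace 𝒳] (μ : Measure 𝒳) [IsProbabilityMeasure μ]
    (C L U : 𝒳 → ℝ) (hCm : Measurable C) (hLm : Measurable L) (hUm : Measurable U)
    (hLC : ∀ x, L x ≤ C x) (hCU : ∀ x, C x ≤ U x)
    (M : ℝ) (hbdd : ∀ x, |L x| ≤ M ∧ |U x| ≤ M)
    (f : 𝒳 → ℝ) (hf : Measurable f) :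
    0 ≤ ∫ x, Wloss (L x) (U x) (f x) ∂μ -
          ∫ x, |C x| * indF (sgnR (f x) ≠ sgnR (C x)) ∂μ ∧
    ∫ x, Wloss (L x) (U x) (f x) ∂μ -
        ∫ x, |C x| * indF (sgnR (f x) ≠ sgnR (C x)) ∂μ ≤
      ∫ x, (U x - L x) ∂μ := by
  have hLU : ∀ x, L x ≤ U x := fun x => (hLC x).trans (hCU x)
  -- closed form for Wloss
  set G : 𝒳 → ℝ := fun x => if 0 < f x then max (-(L x)) 0 else max (U x) 0 with hG
  have hWG : ∀ x, Wloss (L x) (U x) (f x) = G x := fun x => Wloss_eq (hLU x)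
  -- the risk function
  set h : 𝒳 → ℝ := fun x => |C x| * indF (sgnR (f x) ≠ sgnR (C x)) with hh
  -- measurability of h : rewrite as indicator
  have hSmeas : MeasurableSet {x | sgnR (f x) ≠ sgnR (C x)} := by
    have : {x | sgnR (f x) ≠ sgnR (C x)} =
        ({x | 0 < f x} \ {x | 0 < C x}) ∪ ({x | 0 < C x} \ {x | 0 < f x}) := by
      ext x
      by_cases hfx : 0 < f x <;> by_cases hcx : 0 < C x <;>
        norm_num [sgnR, hfx, hcx]
    rw [this]
    have h1 : MeasurableSet {x | 0 < f x} := measurableSet_lt measurable_const hf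
    have h2 : MeasurableSet {x | 0 < C x} := measurableSet_lt measurable_const hCm
    exact (h1.diff h2).union (h2.diff h1)
  have hhmeas : Measurable h := by
    have : h = {x | sgnR (f x) ≠ sgnR (C x)}.indicator (fun x => |C x|) := by
      funext x
      by_cases hx : sgnR (f x) ≠ sgnR (C x) <;>
        simp [hh, indF, Set.indicator_apply, hx]
    rw [this]
    exact hCm.abs.indicator hSmeas
  have hGmeas : Measurable G :=
    Measurable.ite (measurableSet_lt measurable_const hf)
      (hLm.neg.max measurable_const) (hUm.max measurable_const)
  -- bounds
  have hCb : ∀ x, |C x| ≤ M := by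
    intro x
    rcases hbdd x with ⟨hL, hU⟩
    rcases abs_cases (C x) with ⟨he, _⟩ | ⟨he, _⟩
    · rw [he]
      calc C x ≤ U x := hCU x
        _ ≤ |U x| := le_abs_self _
        _ ≤ M := hU
    · rw [he]
      calc -C x ≤ -L x := by linarith [hLC x]
        _ ≤ |L x| := neg_le_abs _
        _ ≤ M := hL
  have hhb : ∀ x, |h x| ≤ M := by
    intro x
    have h0 : 0 ≤ h x := mul_nonneg (abs_nonneg _) (indF_nonneg _)
    rw [abs_of_nonneg h0]
    calc h x ≤ |C x| * 1 := mul_le_mul_of_nonneg_left (indF_le_one _) (abs_nonneg _)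
      _ = |C x| := mul_one _
      _ ≤ M := hCb x
  have hGb : ∀ x, |G x| ≤ M := by
    intro x
    rcases hbdd x with ⟨hL, hU⟩
    have h0 : 0 ≤ G x := by simp only [hG]; split <;> exact le_max_right _ _
    rw [abs_of_nonneg h0]
    simp only [hG]
    have hM0 : 0 ≤ M := le_trans (abs_nonneg _) hL
    split
    · exact max_le (le_trans (neg_le_abs _) hL) hM0
    · exact max_le (le_trans (le_abs_self _) hU) hM0
  have hULb : ∀ x, |U x - L x| ≤ M + M := by
    intro x
    rcases hbdd x with ⟨hL, hU⟩
    calc |U x - L x| ≤ |U x| + |L x| := abs_sub _ _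
      _ ≤ M + M := add_le_add hU hL
  -- integrability
  have hhInt : Integrable h μ :=
    (integrable_const M).mono' hhmeas.aestronglyMeasurable (ae_of_all _ hhb)
  have hGInt : Integrable G μ :=
    (integrable_const M).mono' hGmeas.aestronglyMeasurable (ae_of_all _ hGb)
  have hULInt : Integrable (fun x => U x - L x) μ :=
    (integrable_const (M + M)).mono' (hUm.sub hLm).aestronglyMeasurable (ae_of_all _ hULb)
  -- rewrite Wloss integral
  have hWint : ∫ x, Wloss (L x) (U x) (f x) ∂μ = ∫ x, G x ∂μ := by
    apply integral_congr_ae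
    exact ae_of_all _ hWG
  constructor
  · rw [hWint]
    have : ∫ x, h x ∂μ ≤ ∫ x, G x ∂μ :=
      integral_mono hhInt hGInt (fun x => pt_lower (hLC x) (hCU x))
    linarith
  · rw [hWint]
    have h1 : ∫ x, G x ∂μ ≤ ∫ x, (h x + (U x - L x)) ∂μ :=
      integral_mono hGInt (hhInt.add hULInt) (fun x => pt_upper (hLC x) (hCU x))
    rw [integral_add hhInt hULInt] at h1
    linarith
end

section
/- Pointwise inequality underlying the risk-gap bound: for reals L ≤ C ≤ U and any real f, sup_{c ∈ [L,U]} |c|·1{sgn(f) ≠ sgn(c)} − |C|·1{sgn(f) ≠ sgn(C)} ≤ U − L. -/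
open scoped Classical

/-- for reals L ≤ C ≤ U and any real f,
sup_{c ∈ [L,U]} |c|·1{sgn f ≠ sgn c} − |C|·1{sgn f ≠ sgn C} ≤ U − L. -/
theorem stmt7 (L C U f : ℝ) (h1 : L ≤ C) (h2 : C ≤ U) :
    Wloss L U f - |C| * indF (sgnR f ≠ sgnR C) ≤ U - L := by
  have hne : Nonempty (Set.Icc L U) := ⟨⟨C, h1, h2⟩⟩
  rw [sub_le_iff_le_add, Wloss]
  apply ciSup_le
  rintro ⟨c, hc1, hc2⟩
  simp only [indF, sgnR]
  by_cases hf : 0 < f <;> by_cases hc : 0 < c <;> by_cases hC : 0 < C <;>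
    norm_num [hf, hc, hC] <;>
    rcases abs_cases c with ⟨hac, _⟩ | ⟨hac, _⟩ <;>
    rcases abs_cases C with ⟨haC, _⟩ | ⟨haC, _⟩ <;>
    linarith
end

section
/- Plug-in rule minimizes estimated worst-case risk: given L̂ ≤ Û bounded measurable, the rule f_plug(x) = sgn( Û(x)⁺ − (−L̂(x))⁺ ) minimizes R_upper(f; L̂, Û) = E[ sup_{c ∈ [L̂(X), Û(X)]} |c|·1{sgn(f(X)) ≠ sgn(c)} ] over all measurable f. -/
open MeasureTheory
open scoped Classical

lemma sgnR_pos {t : ℝ} (h : 0 < t) : sgnR t = 1 := if_pos h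
lemma sgnR_nonpos {t : ℝ} (h : ¬ 0 < t) : sgnR t = -1 := if_neg h

lemma wloss_eval (L U t : ℝ) (h : L ≤ U) :
    Wloss L U t = if 0 < t then max (-L) 0 else max U 0 := by
  have hne : Nonempty (Set.Icc L U) := (Set.nonempty_Icc.mpr h).to_subtype
  have hterm_nonneg : ∀ c : Set.Icc L U,
      0 ≤ |c.1| * indF (sgnR t ≠ sgnR c.1) := by
    intro c
    unfold indF
    split <;> simp [abs_nonneg]
  have hbdd : BddAbove (Set.range fun c : Set.Icc L U =>
      |c.1| * indF (sgnR t ≠ sgnR c.1)) := by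
    refine ⟨max (max (-L) 0) (max U 0), ?_⟩
    rintro y ⟨c, rfl⟩
    have h1 : |c.1| ≤ max (max (-L) 0) (max U 0) := by
      have hc := c.2
      rw [abs_le']
      constructor
      · exact le_trans hc.2 (le_trans (le_max_left U 0) (le_max_right _ _))
      · exact le_trans (neg_le_neg hc.1) (le_trans (le_max_left (-L) 0) (le_max_left _ _))
    calc |c.1| * indF (sgnR t ≠ sgnR c.1) ≤ |c.1| * 1 := by
          apply mul_le_mul_of_nonneg_left _ (abs_nonneg _)
          unfold indF; split <;> norm_num
      _ = |c.1| := mul_one _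
      _ ≤ _ := h1
  unfold Wloss
  by_cases ht : 0 < t
  · rw [if_pos ht]
    apply le_antisymm
    · apply ciSup_le
      intro c
      by_cases hc : 0 < c.1
      · have : sgnR t = sgnR c.1 := by rw [sgnR_pos ht, sgnR_pos hc]
        simp [indF, this, le_max_right]
      · have hle : |c.1| ≤ max (-L) 0 := by
          rw [abs_of_nonpos (not_lt.mp hc)]
          exact le_trans (neg_le_neg c.2.1) (le_max_left _ _)
        calc |c.1| * indF (sgnR t ≠ sgnR c.1) ≤ |c.1| * 1 := by
              apply mul_le_mul_of_nonneg_left _ (abs_nonneg _)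
              unfold indF; split <;> norm_num
          _ = |c.1| := mul_one _
          _ ≤ _ := hle
    · by_cases hL : L ≤ 0
      · have hmem : L ∈ Set.Icc L U := ⟨le_refl _, h⟩
        have := le_ciSup hbdd ⟨L, hmem⟩
        have hval : |(⟨L, hmem⟩ : Set.Icc L U).1| * indF (sgnR t ≠ sgnR L) = -L := by
          have hs : sgnR t ≠ sgnR L := by
            rw [sgnR_pos ht, sgnR_nonpos (not_lt.mpr hL)]; norm_num
          simp [indF, hs, abs_of_nonpos hL]
        rw [hval] at this
        rw [max_eq_left (by linarith : (0:ℝ) ≤ -L)]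
        exact this
      · rw [max_eq_right (by push_neg at hL; linarith : (-L:ℝ) ≤ 0)]
        have hmem : L ∈ Set.Icc L U := ⟨le_refl _, h⟩
        exact le_ciSup_of_le hbdd ⟨L, hmem⟩ (hterm_nonneg _)
  · rw [if_neg ht]
    apply le_antisymm
    · apply ciSup_le
      intro c
      by_cases hc : 0 < c.1
      · have hs : sgnR t ≠ sgnR c.1 := by
          rw [sgnR_pos hc, sgnR_nonpos ht]; norm_num
        have hle : |c.1| ≤ max U 0 := by
          rw [abs_of_pos hc]
          exact le_trans c.2.2 (le_max_left _ _)
        simpa [indF, hs] using hle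
      · have : sgnR t = sgnR c.1 := by rw [sgnR_nonpos ht, sgnR_nonpos hc]
        simp [indF, this, le_max_right]
    · by_cases hU : 0 < U
      · have hmem : U ∈ Set.Icc L U := ⟨h, le_refl _⟩
        have := le_ciSup hbdd ⟨U, hmem⟩
        have hval : |(⟨U, hmem⟩ : Set.Icc L U).1| * indF (sgnR t ≠ sgnR U) = U := by
          have hs : sgnR t ≠ sgnR U := by
            rw [sgnR_pos hU, sgnR_nonpos ht]; norm_num
          simp [indF, hs, abs_of_pos hU]
        rw [hval] at this
        rw [max_eq_left hU.le]
        exact this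
      · rw [max_eq_right (not_lt.mp hU)]
        have hmem : L ∈ Set.Icc L U := ⟨le_refl _, h⟩
        exact le_ciSup_of_le hbdd ⟨L, hmem⟩ (hterm_nonneg _)

/-- Proposition G1: the plug-in rule
f_plug(x) = sgn(Û(x)⁺ − (−L̂(x))⁺) (with sign +1 at ties) minimizes the
estimated worst-case risk R_upper(·; L̂, Û) over all measurable rules. -/
theorem stmt18 {𝒳 : Type*} [MeasurableSpace 𝒳] (μ : Measure 𝒳) [IsProbabilityMeasure μ]
    (Lhat Uhat : 𝒳 → ℝ) (hm₁ : Measurable Lhat) (hm₂ : Measurable Uhat)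
    (hhat : ∀ x, Lhat x ≤ Uhat x)
    (M : ℝ) (hbdd : ∀ x, |Lhat x| ≤ M ∧ |Uhat x| ≤ M)
    (fplug : 𝒳 → ℝ)
    (hplug : ∀ x, fplug x =
      if 0 ≤ max (Uhat x) 0 - max (-(Lhat x)) 0 then (1 : ℝ) else -1) :
    ∀ f : 𝒳 → ℝ, Measurable f →
      ∫ x, Wloss (Lhat x) (Uhat x) (fplug x) ∂μ ≤
        ∫ x, Wloss (Lhat x) (Uhat x) (f x) ∂μ := by
  intro f hf
  -- rewrite integrands
  have heq : ∀ g : 𝒳 → ℝ, (fun x => Wloss (Lhat x) (Uhat x) (g x)) =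
      fun x => if 0 < g x then max (-(Lhat x)) 0 else max (Uhat x) 0 := by
    intro g; funext x; exact wloss_eval _ _ _ (hhat x)
  rw [heq f, heq fplug]
  -- integrability helper
  have hInt : ∀ g : 𝒳 → ℝ, Measurable g → Integrable
      (fun x => if 0 < g x then max (-(Lhat x)) 0 else max (Uhat x) 0) μ := by
    intro g hg
    have hmeas : Measurable (fun x => if 0 < g x then max (-(Lhat x)) 0 else max (Uhat x) 0) := by
      apply Measurable.ite
      · exact measurableSet_lt measurable_const hg
      · exact hm₁.neg.max measurable_const
      · exact hm₂.max measurable_const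
    refine ⟨hmeas.aestronglyMeasurable, ?_⟩
    apply MeasureTheory.HasFiniteIntegral.of_bounded (C := M)
    filter_upwards with x
    have h1 := (hbdd x).1
    have h2 := (hbdd x).2
    have hM0 : 0 ≤ M := le_trans (abs_nonneg _) h1
    rw [Real.norm_eq_abs]
    split
    · rw [abs_of_nonneg (le_max_right _ _)]
      apply max_le _ hM0
      calc -(Lhat x) ≤ |Lhat x| := neg_le_abs _
        _ ≤ M := h1
    · rw [abs_of_nonneg (le_max_right _ _)]
      apply max_le _ hM0
      calc Uhat x ≤ |Uhat x| := le_abs_self _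
        _ ≤ M := h2
  have hmplug : Measurable fplug := by
    have : fplug = fun x =>
        if 0 ≤ max (Uhat x) 0 - max (-(Lhat x)) 0 then (1 : ℝ) else -1 :=
      funext hplug
    rw [this]
    apply Measurable.ite _ measurable_const measurable_const
    exact measurableSet_le measurable_const
      ((hm₂.max measurable_const).sub (hm₁.neg.max measurable_const))
  apply integral_mono (hInt fplug hmplug) (hInt f hf)
  intro x
  simp only
  have hUL : max (-(Lhat x)) 0 ≤ max (Uhat x) 0 ∨ max (Uhat x) 0 ≤ max (-(Lhat x)) 0 :=
    le_total _ _
  by_cases hc : 0 ≤ max (Uhat x) 0 - max (-(Lhat x)) 0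
  · have hplugx : 0 < fplug x := by rw [hplug x, if_pos hc]; norm_num
    rw [if_pos hplugx]
    have hle : max (-(Lhat x)) 0 ≤ max (Uhat x) 0 := by linarith [sub_nonneg.mp hc]
    split <;> [exact le_refl _; exact hle]
  · have hplugx : ¬ 0 < fplug x := by rw [hplug x, if_neg hc]; norm_num
    rw [if_neg hplugx]
    have hle : max (Uhat x) 0 ≤ max (-(Lhat x)) 0 := by
      push_neg at hc; linarith
    split <;> [exact hle; exact le_refl _]
end

section
/- Excess risk of the plug-in rule: suppose E[|L̂(X) − L(X)|] ≤ δ_L and E[|Û(X) − U(X)|] ≤ δ_U with L ≤ U, L̂ ≤ Û bounded measurable. Let f_plug(x) = sgn(Û(x)⁺ − (−L̂(x))⁺) and let R*_upper be the Bayes risk of R_upper(·; L, U). Then R_upper(f_plug; L, U) − R*_upper ≤ E[|η̂(X) − η(X)|] ≤ δ_L + δ_U, where η(x) = |U(x)|·1{L(x)>0} − |L(x)|·1{U(x)<0} + (|U(x)|−|L(x)|)·1{L(x) ≤ 0 ≤ U(x)} and η̂ is defined identically from L̂, Û. -/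
open MeasureTheory
open scoped Classical

lemma wloss_pos (L U f : ℝ) (h : L ≤ U) (hf : 0 < f) :
    Wloss L U f = max (-L) 0 := by
  have hne : Nonempty (Set.Icc L U) := ⟨⟨L, by simp [h]⟩⟩
  have hterm : ∀ c : Set.Icc L U, |c.1| * indF (sgnR f ≠ sgnR c.1)
      = if 0 < c.1 then 0 else -c.1 := by
    intro c
    by_cases hc : 0 < (c : ℝ)
    · simp [sgnR, indF, hf, hc]
    · have hne' : sgnR f ≠ sgnR c.1 := by simp [sgnR, hf, hc]; norm_num
      simp [indF, hne', hc, abs_of_nonpos (le_of_not_gt hc)]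
  unfold Wloss
  apply le_antisymm
  · apply ciSup_le
    intro c
    rw [hterm c]
    split_ifs with hc
    · exact le_max_right _ _
    · exact le_trans (neg_le_neg c.2.1) (le_max_left _ _)
  · have hbdd : BddAbove (Set.range fun c : Set.Icc L U =>
        |c.1| * indF (sgnR f ≠ sgnR c.1)) := by
      refine ⟨max (-L) 0, ?_⟩
      rintro r ⟨c, rfl⟩
      dsimp only
      rw [hterm c]
      split_ifs with hc
      · exact le_max_right _ _
      · exact le_trans (neg_le_neg c.2.1) (le_max_left _ _)
    by_cases hL : 0 < L
    · have h0 : max (-L) 0 = 0 := max_eq_right (by linarith)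
      rw [h0]
      refine le_trans ?_ (le_ciSup hbdd ⟨L, by simp [h]⟩)
      rw [hterm]; simp [hL]
    · have h0 : max (-L) 0 = -L := max_eq_left (by linarith [not_lt.1 hL])
      rw [h0]
      refine le_trans ?_ (le_ciSup hbdd ⟨L, by simp [h]⟩)
      rw [hterm]; simp [hL]

lemma wloss_nonpos (L U f : ℝ) (h : L ≤ U) (hf : ¬ 0 < f) :
    Wloss L U f = max U 0 := by
  have hne : Nonempty (Set.Icc L U) := ⟨⟨L, by simp [h]⟩⟩
  have hterm : ∀ c : Set.Icc L U, |c.1| * indF (sgnR f ≠ sgnR c.1)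
      = if 0 < c.1 then c.1 else 0 := by
    intro c
    by_cases hc : 0 < (c : ℝ)
    · have hne' : sgnR f ≠ sgnR c.1 := by simp [sgnR, hf, hc]; norm_num
      simp [indF, hne', hc, abs_of_pos hc]
    · simp [sgnR, indF, hf, hc]
  unfold Wloss
  apply le_antisymm
  · apply ciSup_le
    intro c
    rw [hterm c]
    split_ifs with hc
    · exact le_trans c.2.2 (le_max_left _ _)
    · exact le_max_right _ _
  · have hbdd : BddAbove (Set.range fun c : Set.Icc L U =>
        |c.1| * indF (sgnR f ≠ sgnR c.1)) := by
      refine ⟨max U 0, ?_⟩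
      rintro r ⟨c, rfl⟩
      dsimp only
      rw [hterm c]
      split_ifs with hc
      · exact le_trans c.2.2 (le_max_left _ _)
      · exact le_max_right _ _
    by_cases hU : 0 < U
    · have h0 : max U 0 = U := max_eq_left hU.le
      rw [h0]
      refine le_trans ?_ (le_ciSup hbdd ⟨U, by simp [h]⟩)
      rw [hterm]; simp [hU]
    · have h0 : max U 0 = 0 := max_eq_right (le_of_not_gt hU)
      rw [h0]
      refine le_trans ?_ (le_ciSup hbdd ⟨U, by simp [h]⟩)
      rw [hterm]; simp [hU]

lemma etaF_eq (L U : ℝ) (h : L ≤ U) : etaF L U = max U 0 - max (-L) 0 := by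
  unfold etaF indF
  rcases lt_or_ge 0 L with hL | hL
  · have hU : 0 < U := lt_of_lt_of_le hL h
    have h1 : ¬ U < 0 := not_lt.2 hU.le
    have h2 : ¬ (L ≤ 0 ∧ 0 ≤ U) := fun hh => absurd hh.1 (not_le.2 hL)
    rw [if_pos hL, if_neg h1, if_neg h2, max_eq_left hU.le,
      max_eq_right (by linarith : -L ≤ 0), abs_of_pos hU]
    ring
  · rcases lt_or_ge U 0 with hU | hU
    · have hL' : L < 0 := lt_of_le_of_lt h hU
      have h1 : ¬ 0 < L := not_lt.2 hL
      have h2 : ¬ (L ≤ 0 ∧ 0 ≤ U) := fun hh => absurd hh.2 (not_le.2 hU)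
      rw [if_neg h1, if_pos hU, if_neg h2, max_eq_right hU.le,
        max_eq_left (by linarith : (0:ℝ) ≤ -L), abs_of_neg hL']
      ring
    · have h1 : ¬ 0 < L := not_lt.2 hL
      have h2 : ¬ U < 0 := not_lt.2 hU
      rw [if_neg h1, if_neg h2, if_pos ⟨hL, hU⟩, max_eq_left hU,
        max_eq_left (by linarith : (0:ℝ) ≤ -L), abs_of_nonneg hU, abs_of_nonpos hL]
      ring

lemma integrable_of_bdd {𝒳 : Type*} [MeasurableSpace 𝒳] {μ : Measure 𝒳}
    [IsProbabilityMeasure μ] {g : 𝒳 → ℝ} (hg : Measurable g) (C : ℝ)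
    (hC : ∀ x, |g x| ≤ C) : Integrable g μ :=
  (integrable_const C).mono' hg.aestronglyMeasurable
    (Filter.Eventually.of_forall fun x => by simpa using hC x)

/-- Theorem G1: excess risk of the plug-in rule:
R_upper(f_plug; L, U) − R*_upper ≤ E[|η̂(X) − η(X)|] ≤ δ_L + δ_U. -/
theorem stmt19 {𝒳 : Type*} [MeasurableSpace 𝒳] (μ : Measure 𝒳) [IsProbabilityMeasure μ]
    (L U Lhat Uhat : 𝒳 → ℝ)
    (hm₁ : Measurable L) (hm₂ : Measurable U)
    (hm₃ : Measurable Lhat) (hm₄ : Measurable Uhat)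
    (hLU : ∀ x, L x ≤ U x) (hhat : ∀ x, Lhat x ≤ Uhat x)
    (M : ℝ) (hbdd : ∀ x, |L x| ≤ M ∧ |U x| ≤ M ∧ |Lhat x| ≤ M ∧ |Uhat x| ≤ M)
    (δL δU : ℝ) (hδL0 : 0 ≤ δL) (hδU0 : 0 ≤ δU)
    (hδL : ∫ x, |Lhat x - L x| ∂μ ≤ δL) (hδU : ∫ x, |Uhat x - U x| ∂μ ≤ δU)
    (fplug : 𝒳 → ℝ)
    (hplug : ∀ x, fplug x =
      if 0 ≤ max (Uhat x) 0 - max (-(Lhat x)) 0 then (1 : ℝ) else -1) :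
    ∫ x, Wloss (L x) (U x) (fplug x) ∂μ -
        sInf {r : ℝ | ∃ f : 𝒳 → ℝ, Measurable f ∧
          r = ∫ x, Wloss (L x) (U x) (f x) ∂μ} ≤
      ∫ x, |etaF (Lhat x) (Uhat x) - etaF (L x) (U x)| ∂μ ∧
    ∫ x, |etaF (Lhat x) (Uhat x) - etaF (L x) (U x)| ∂μ ≤ δL + δU := by
  -- notation
  set a : 𝒳 → ℝ := fun x => max (-(L x)) 0 with ha
  set b : 𝒳 → ℝ := fun x => max (U x) 0 with hb
  set ah : 𝒳 → ℝ := fun x => max (-(Lhat x)) 0 with hah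
  set bh : 𝒳 → ℝ := fun x => max (Uhat x) 0 with hbh
  have hma : Measurable a := hm₁.neg.max measurable_const
  have hmb : Measurable b := hm₂.max measurable_const
  have hmah : Measurable ah := hm₃.neg.max measurable_const
  have hmbh : Measurable bh := hm₄.max measurable_const
  have haM : ∀ x, |a x| ≤ |M| := by
    intro x
    rw [abs_of_nonneg (le_max_right _ _)]
    exact max_le (le_trans (neg_le_abs _) (le_trans (abs_neg (L x) ▸ (hbdd x).1)
      (le_abs_self M))) (abs_nonneg M)
  have hbM : ∀ x, |b x| ≤ |M| := by
    intro x
    rw [abs_of_nonneg (le_max_right _ _)]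
    exact max_le (le_trans (le_abs_self _) (le_trans (hbdd x).2.1 (le_abs_self M)))
      (abs_nonneg M)
  have hahM : ∀ x, |ah x| ≤ |M| := by
    intro x
    rw [abs_of_nonneg (le_max_right _ _)]
    exact max_le (le_trans (neg_le_abs _) (le_trans (abs_neg (Lhat x) ▸ (hbdd x).2.2.1)
      (le_abs_self M))) (abs_nonneg M)
  have hbhM : ∀ x, |bh x| ≤ |M| := by
    intro x
    rw [abs_of_nonneg (le_max_right _ _)]
    exact max_le (le_trans (le_abs_self _) (le_trans (hbdd x).2.2.2 (le_abs_self M)))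
      (abs_nonneg M)
  -- eta closed forms
  have heta : ∀ x, etaF (L x) (U x) = b x - a x := fun x => etaF_eq _ _ (hLU x)
  have hetah : ∀ x, etaF (Lhat x) (Uhat x) = bh x - ah x := fun x => etaF_eq _ _ (hhat x)
  -- closed form of the plug-in risk
  have hfW : ∀ x, Wloss (L x) (U x) (fplug x)
      = if 0 ≤ bh x - ah x then a x else b x := by
    intro x
    rw [hplug x]
    by_cases h : 0 ≤ bh x - ah x
    · rw [if_pos h, if_pos h]
      exact wloss_pos _ _ _ (hLU x) one_pos
    · rw [if_neg h, if_neg h]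
      exact wloss_nonpos _ _ _ (hLU x) (by norm_num)
  -- integrability
  have hDmeas : MeasurableSet {x | 0 ≤ bh x - ah x} :=
    measurableSet_le measurable_const (hmbh.sub hmah)
  have hWint : Integrable (fun x => if 0 ≤ bh x - ah x then a x else b x) μ := by
    refine integrable_of_bdd (Measurable.ite hDmeas hma hmb) |M| ?_
    intro x; by_cases h : 0 ≤ bh x - ah x <;> simp [h, haM x, hbM x]
  have hmint : Integrable (fun x => min (a x) (b x)) μ := by
    refine integrable_of_bdd (hma.min hmb) |M| ?_
    intro x
    rcases min_cases (a x) (b x) with ⟨h1, _⟩ | ⟨h1, _⟩ <;> rw [h1]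
    exacts [haM x, hbM x]
  have hEint : Integrable (fun x => |etaF (Lhat x) (Uhat x) - etaF (L x) (U x)|) μ := by
    have : (fun x => |etaF (Lhat x) (Uhat x) - etaF (L x) (U x)|)
        = fun x => |(bh x - ah x) - (b x - a x)| := by
      funext x; rw [heta x, hetah x]
    rw [this]
    refine integrable_of_bdd (((hmbh.sub hmah).sub (hmb.sub hma)).abs) (4 * |M|) ?_
    intro x
    rw [abs_abs]
    have := haM x; have := hbM x; have := hahM x; have := hbhM x
    have h1 := abs_le.1 (haM x); have h2 := abs_le.1 (hbM x)
    have h3 := abs_le.1 (hahM x); have h4 := abs_le.1 (hbhM x)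
    rw [abs_le]; constructor <;> linarith
  have hdLint : Integrable (fun x => |Lhat x - L x|) μ := by
    refine integrable_of_bdd ((hm₃.sub hm₁).abs) (2 * |M|) ?_
    intro x
    rw [abs_abs, abs_le]
    have h1 := abs_le.1 (le_trans (hbdd x).1 (le_abs_self M))
    have h3 := abs_le.1 (le_trans (hbdd x).2.2.1 (le_abs_self M))
    constructor <;> linarith
  have hdUint : Integrable (fun x => |Uhat x - U x|) μ := by
    refine integrable_of_bdd ((hm₄.sub hm₂).abs) (2 * |M|) ?_
    intro x
    rw [abs_abs, abs_le]
    have h2 := abs_le.1 (le_trans (hbdd x).2.1 (le_abs_self M))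
    have h4 := abs_le.1 (le_trans (hbdd x).2.2.2 (le_abs_self M))
    constructor <;> linarith
  -- second inequality
  have hsecond : ∫ x, |etaF (Lhat x) (Uhat x) - etaF (L x) (U x)| ∂μ ≤ δL + δU := by
    have hpt : ∀ x, |etaF (Lhat x) (Uhat x) - etaF (L x) (U x)|
        ≤ |Lhat x - L x| + |Uhat x - U x| := by
      intro x
      rw [heta x, hetah x]
      have e1 : |bh x - b x| ≤ |Uhat x - U x| := abs_max_sub_max_le_abs _ _ _
      have e2 : |ah x - a x| ≤ |Lhat x - L x| := by
        have := abs_max_sub_max_le_abs (-(Lhat x)) (-(L x)) 0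
        calc |ah x - a x| ≤ |(-(Lhat x)) - (-(L x))| := this
          _ = |Lhat x - L x| := by rw [← abs_neg]; ring_nf
      calc |(bh x - ah x) - (b x - a x)| = |(bh x - b x) - (ah x - a x)| := by ring_nf
        _ ≤ |bh x - b x| + |ah x - a x| := abs_sub _ _
        _ ≤ |Lhat x - L x| + |Uhat x - U x| := by linarith
    calc ∫ x, |etaF (Lhat x) (Uhat x) - etaF (L x) (U x)| ∂μ
        ≤ ∫ x, (|Lhat x - L x| + |Uhat x - U x|) ∂μ :=
          integral_mono hEint (hdLint.add hdUint) hpt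
      _ = (∫ x, |Lhat x - L x| ∂μ) + ∫ x, |Uhat x - U x| ∂μ :=
          integral_add hdLint hdUint
      _ ≤ δL + δU := add_le_add hδL hδU
  refine ⟨?_, hsecond⟩
  -- the Bayes risk is at least ∫ min a b
  set S : Set ℝ := {r : ℝ | ∃ f : 𝒳 → ℝ, Measurable f ∧
      r = ∫ x, Wloss (L x) (U x) (f x) ∂μ} with hS
  have hfplug_meas : Measurable fplug := by
    have : fplug = fun x => if 0 ≤ bh x - ah x then (1:ℝ) else -1 := funext hplug
    rw [this]
    exact Measurable.ite hDmeas measurable_const measurable_const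
  have hSne : S.Nonempty := ⟨_, fplug, hfplug_meas, rfl⟩
  have hInf : ∫ x, min (a x) (b x) ∂μ ≤ sInf S := by
    apply le_csInf hSne
    rintro r ⟨f, hf, rfl⟩
    have hWf : ∀ x, Wloss (L x) (U x) (f x)
        = if 0 < f x then a x else b x := by
      intro x
      by_cases h : 0 < f x
      · rw [if_pos h]; exact wloss_pos _ _ _ (hLU x) h
      · rw [if_neg h]; exact wloss_nonpos _ _ _ (hLU x) h
    have hWfint : Integrable (fun x => if 0 < f x then a x else b x) μ := by
      refine integrable_of_bdd
        (Measurable.ite (measurableSet_lt measurable_const hf) hma hmb) |M| ?_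
      intro x; by_cases h : 0 < f x <;> simp [h, haM x, hbM x]
    calc ∫ x, min (a x) (b x) ∂μ ≤ ∫ x, (if 0 < f x then a x else b x) ∂μ := by
          refine integral_mono hmint hWfint fun x => ?_
          by_cases h : 0 < f x <;> simp [h, min_le_left, min_le_right]
      _ = ∫ x, Wloss (L x) (U x) (f x) ∂μ := by
          refine integral_congr_ae (Filter.Eventually.of_forall fun x => ?_)
          exact (hWf x).symm
  -- pointwise excess risk bound
  have hpt : ∀ x, (if 0 ≤ bh x - ah x then a x else b x)
      ≤ min (a x) (b x) + |etaF (Lhat x) (Uhat x) - etaF (L x) (U x)| := by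
    intro x
    rw [heta x, hetah x]
    by_cases h : 0 ≤ bh x - ah x
    · rw [if_pos h]
      rcases le_total (a x) (b x) with h' | h'
      · rw [min_eq_left h']
        linarith [abs_nonneg ((bh x - ah x) - (b x - a x))]
      · rw [min_eq_right h']
        have : a x - b x ≤ (bh x - ah x) - (b x - a x) := by linarith
        linarith [le_abs_self ((bh x - ah x) - (b x - a x))]
    · rw [if_neg h]
      push_neg at h
      rcases le_total (b x) (a x) with h' | h'
      · rw [min_eq_right h']
        linarith [abs_nonneg ((bh x - ah x) - (b x - a x))]
      · rw [min_eq_left h']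
        have : b x - a x ≤ (b x - a x) - (bh x - ah x) := by linarith
        linarith [neg_abs_le ((bh x - ah x) - (b x - a x))]
  have hplugrw : ∫ x, Wloss (L x) (U x) (fplug x) ∂μ
      = ∫ x, (if 0 ≤ bh x - ah x then a x else b x) ∂μ :=
    integral_congr_ae (Filter.Eventually.of_forall fun x => hfW x)
  rw [hplugrw]
  have : ∫ x, (if 0 ≤ bh x - ah x then a x else b x) ∂μ
      ≤ (∫ x, min (a x) (b x) ∂μ) + ∫ x, |etaF (Lhat x) (Uhat x) - etaF (L x) (U x)| ∂μ := by
    calc ∫ x, (if 0 ≤ bh x - ah x then a x else b x) ∂μ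
        ≤ ∫ x, (min (a x) (b x) + |etaF (Lhat x) (Uhat x) - etaF (L x) (U x)|) ∂μ :=
          integral_mono hWint (hmint.add hEint) hpt
      _ = _ := integral_add hmint hEint
  linarith
end
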